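/- Let X be a normal random variable with mean (r − σ²/2)t and variance σ²t, where σ > 0, r ≥ 0, t > 0. Let 0 < L < S₀ and suppose ε ∈ (0, 1/2) satisfies log(1/(2ε)) > (4/5)(1 − 2r/σ²) log(S₀/L) and t < 8(log(S₀/L))²/(25σ² log(1/(2ε))). Then P(X ≤ log(L/S₀)) < ε and E[e^X · 1{e^X ≤ L/S₀}] < ε·e^{rt}. -/

import Mathlib

/-!
Write `ℓ = log (S₀ / L)` and `K = log (1 / (2ε))`. For `X ~ N(m, v)` and `c ≤ m`, comparing the
density of `X` on `(-∞, c]` with that of `N(c, v)` gives `P(X ≤ c) ≤ ½ exp (-(m - c)² / 2v)`.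
The hypotheses on `ε` and `t` say exactly that the barrier `-ℓ` lies at least `4ℓ/5` below the
mean and that `2vK < (4ℓ/5)²`, so this bound is below `ε`. For the moment, `eˣ` times the
`N(m, v)` density is `e^(m + v/2) = e^(rt)` times the `N(m + v, v)` density, whose mean lies even
further above the barrier.
-/

open MeasureTheory ProbabilityTheory Real Set

open scoped NNReal

namespace ProbabilityTheory

variable {m c ε : ℝ} {v : ℝ≥0}

lemma gaussianReal_real_Iic_mean (m : ℝ) (hv : v ≠ 0) :
    (gaussianReal m v).real (Iic m) = 1 / 2 := by
  have := nullSingletonClass_gaussianReal (μ := m) hv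
  have hrefl : (gaussianReal m v).real (Ici m) = (gaussianReal m v).real (Iic m) := by
    have hmap := gaussianReal_map_const_sub (μ := m) (v := v) (2 * m)
    rw [show 2 * m - m = m by ring] at hmap
    conv_lhs => rw [← hmap]
    rw [map_measureReal_apply (by fun_prop) measurableSet_Ici]
    congr 1
    ext x
    simp only [mem_preimage, mem_Ici, mem_Iic]
    constructor <;> intro h <;> linarith
  have hcompl := probReal_add_probReal_compl (μ := gaussianReal m v) (measurableSet_Iic (a := m))
  rw [compl_Iic, measureReal_congr Ioi_ae_eq_Ici, hrefl] at hcompl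
  linarith

lemma gaussianReal_real_eq_setIntegral (m : ℝ) (hv : v ≠ 0) (s : Set ℝ) :
    (gaussianReal m v).real s = ∫ x in s, gaussianPDFReal m v x := by
  rw [measureReal_def, gaussianReal_apply_eq_integral _ hv,
    ENNReal.toReal_ofReal (integral_nonneg fun x => gaussianPDFReal_nonneg _ _ _)]

lemma gaussianPDFReal_le_exp_mul_gaussianPDFReal {x : ℝ} (hx : x ≤ c) (hc : c ≤ m) :
    gaussianPDFReal m v x ≤ exp (-(m - c) ^ 2 / (2 * v)) * gaussianPDFReal c v x := by
  have hexp : exp (-(x - m) ^ 2 / (2 * v)) ≤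
      exp (-(m - c) ^ 2 / (2 * v)) * exp (-(x - c) ^ 2 / (2 * v)) := by
    rw [← exp_add, ← add_div]
    gcongr
    nlinarith [mul_nonneg (sub_nonneg.mpr hx) (sub_nonneg.mpr hc)]
  calc gaussianPDFReal m v x
      = (√(2 * π * v))⁻¹ * exp (-(x - m) ^ 2 / (2 * v)) := rfl
    _ ≤ (√(2 * π * v))⁻¹ * (exp (-(m - c) ^ 2 / (2 * v)) * exp (-(x - c) ^ 2 / (2 * v))) := by
      gcongr
    _ = exp (-(m - c) ^ 2 / (2 * v)) * gaussianPDFReal c v x := by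
      rw [gaussianPDFReal]; ring

lemma gaussianReal_real_Iic_le (hv : v ≠ 0) (hc : c ≤ m) :
    (gaussianReal m v).real (Iic c) ≤ exp (-(m - c) ^ 2 / (2 * v)) / 2 := by
  rw [gaussianReal_real_eq_setIntegral _ hv]
  calc ∫ x in Iic c, gaussianPDFReal m v x
      ≤ ∫ x in Iic c, exp (-(m - c) ^ 2 / (2 * v)) * gaussianPDFReal c v x :=
        setIntegral_mono_on (integrable_gaussianPDFReal m v).integrableOn
          ((integrable_gaussianPDFReal c v).const_mul _).integrableOn measurableSet_Iic
          fun x hx => gaussianPDFReal_le_exp_mul_gaussianPDFReal hx hc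
    _ = exp (-(m - c) ^ 2 / (2 * v)) / 2 := by
      rw [integral_const_mul, ← gaussianReal_real_eq_setIntegral _ hv,
        gaussianReal_real_Iic_mean _ hv]
      ring

lemma gaussianReal_real_Iic_lt (hv : v ≠ 0) (hε : 0 < ε) (hc : c ≤ m)
    (h : 2 * v * log (1 / (2 * ε)) < (m - c) ^ 2) :
    (gaussianReal m v).real (Iic c) < ε := by
  have hv0 : (0 : ℝ) < v := by positivity
  have hexp : exp (-(m - c) ^ 2 / (2 * v)) < 2 * ε := by
    calc exp (-(m - c) ^ 2 / (2 * v)) < exp (-log (1 / (2 * ε))) := by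
          gcongr
          rw [neg_div, neg_lt_neg_iff, lt_div_iff₀ (by positivity)]
          linarith
      _ = 2 * ε := by rw [one_div, log_inv, neg_neg, exp_log (by positivity)]
  linarith [gaussianReal_real_Iic_le hv hc]

lemma gaussianPDFReal_mul_exp (m : ℝ) (v : ℝ≥0) (x : ℝ) :
    gaussianPDFReal m v x * exp x = exp (m + v / 2) * gaussianPDFReal (m + v) v x := by
  rcases eq_or_ne v 0 with rfl | hv
  · simp [gaussianPDFReal]
  have hexp : exp (-(x - m) ^ 2 / (2 * v)) * exp x
      = exp (m + v / 2) * exp (-(x - (m + v)) ^ 2 / (2 * v)) := by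
    rw [← exp_add, ← exp_add]
    congr 1
    field_simp
    ring
  simp only [gaussianPDFReal]
  rw [mul_assoc, hexp]
  ring

lemma setIntegral_exp_gaussianReal (hv : v ≠ 0) {s : Set ℝ} (hs : MeasurableSet s) :
    ∫ x in s, exp x ∂gaussianReal m v = exp (m + v / 2) * (gaussianReal (m + v) v).real s := by
  rw [gaussianReal_of_var_ne_zero _ hv, gaussianPDF_def,
    setIntegral_withDensity_eq_setIntegral_toReal_smul (by fun_prop)
      (ae_of_all _ fun _ => ENNReal.ofReal_lt_top) _ hs,
    gaussianReal_real_eq_setIntegral _ hv, ← integral_const_mul]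
  simp_rw [ENNReal.toReal_ofReal (gaussianPDFReal_nonneg _ _ _), smul_eq_mul,
    gaussianPDFReal_mul_exp]

end ProbabilityTheory

lemma drift_gap_and_variance_bound {r σ t ℓ K : ℝ} (hσ : 0 < σ) (ht : 0 < t) (hℓ : 0 < ℓ)
    (hKℓ : K > (4 / 5) * (1 - 2 * r / σ ^ 2) * ℓ)
    (htK : t < 8 * ℓ ^ 2 / (25 * σ ^ 2 * K)) :
    4 * ℓ / 5 ≤ (r - σ ^ 2 / 2) * t + ℓ ∧ 2 * (σ ^ 2 * t) * K < (4 * ℓ / 5) ^ 2 := by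
  have hK : 0 < K := by
    by_contra! hK
    have : 8 * ℓ ^ 2 / (25 * σ ^ 2 * K) ≤ 0 :=
      div_nonpos_of_nonneg_of_nonpos (by positivity)
        (mul_nonpos_of_nonneg_of_nonpos (by positivity) hK)
    linarith
  have htK' : 25 * σ ^ 2 * K * t < 8 * ℓ ^ 2 := by
    rwa [lt_div_iff₀ (by positivity), mul_comm] at htK
  have hKℓ' : 4 * (σ ^ 2 - 2 * r) * ℓ < 5 * σ ^ 2 * K := by
    have := mul_lt_mul_of_pos_left hKℓ (by positivity : (0 : ℝ) < 5 * σ ^ 2)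
    field_simp at this
    linarith
  refine ⟨?_, by nlinarith⟩
  suffices 5 * (σ ^ 2 - 2 * r) * t ≤ 2 * ℓ by linarith
  rcases le_or_gt (σ ^ 2 - 2 * r) 0 with hA | hA
  · nlinarith
  · -- `25 σ² K t A < 8 ℓ² A < 10 σ² K ℓ` with `A = σ² - 2r`
    have : 5 * σ ^ 2 * K * (5 * (σ ^ 2 - 2 * r) * t) < 5 * σ ^ 2 * K * (2 * ℓ) := by nlinarith
    exact (lt_of_mul_lt_mul_left this (by positivity)).le

theorem lognormal_lower_tail_general (r σ t S₀ L ε : ℝ)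
    (hσ : 0 < σ) (ht : 0 < t) (hL : 0 < L) (hLS : L < S₀)
    (hε : ε ∈ Set.Ioo (0 : ℝ) (1 / 2))
    (hεcond : Real.log (1 / (2 * ε)) > (4 / 5) * (1 - 2 * r / σ ^ 2) * Real.log (S₀ / L))
    (htcond : t < 8 * (Real.log (S₀ / L)) ^ 2 / (25 * σ ^ 2 * Real.log (1 / (2 * ε)))) :
    ((gaussianReal ((r - σ ^ 2 / 2) * t) (Real.toNNReal (σ ^ 2 * t)))
        (Set.Iic (Real.log (L / S₀)))).toReal < ε ∧
      ∫ x in {x : ℝ | Real.exp x ≤ L / S₀}, Real.exp x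
          ∂(gaussianReal ((r - σ ^ 2 / 2) * t) (Real.toNNReal (σ ^ 2 * t)))
        < ε * Real.exp (r * t) := by
  set ℓ := Real.log (S₀ / L)
  have hℓ : 0 < ℓ := log_pos ((one_lt_div hL).mpr hLS)
  have hbarrier : log (L / S₀) = -ℓ := by rw [← log_inv, inv_div]
  have hv : (σ ^ 2 * t).toNNReal ≠ 0 := (toNNReal_pos.mpr (by positivity)).ne'
  have hv' : ((σ ^ 2 * t).toNNReal : ℝ) = σ ^ 2 * t := coe_toNNReal _ (by positivity)
  obtain ⟨hgap, hvar⟩ := drift_gap_and_variance_bound hσ ht hℓ hεcond htcond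
  have htail : ∀ m, (r - σ ^ 2 / 2) * t ≤ m →
      (gaussianReal m (σ ^ 2 * t).toNNReal).real (Iic (-ℓ)) < ε := fun m hm =>
    gaussianReal_real_Iic_lt hv hε.1 (by linarith) (by rw [hv']; nlinarith)
  refine ⟨by rw [← measureReal_def, hbarrier]; exact htail _ le_rfl, ?_⟩
  have hset : {x : ℝ | exp x ≤ L / S₀} = Iic (-ℓ) := by
    ext x
    rw [← hbarrier]
    exact (le_log_iff_exp_le (div_pos hL (hL.trans hLS))).symm
  rw [hset, setIntegral_exp_gaussianReal hv measurableSet_Iic, hv',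
    show (r - σ ^ 2 / 2) * t + σ ^ 2 * t / 2 = r * t by ring, mul_comm ε]
  exact mul_lt_mul_of_pos_left (htail _ (le_add_of_nonneg_right (by positivity))) (exp_pos _)

/-- Lower-tail bounds for the lognormal: if `X ~ N((r - σ²/2)t, σ²t)`, `0 < L < S₀`,
`ε ∈ (0, 1/2)` satisfies `log(1/(2ε)) > (4/5)(1 - 2r/σ²) log(S₀/L)` and
`t < 8(log(S₀/L))²/(25σ² log(1/(2ε)))`, then `P(X ≤ log(L/S₀)) < ε` and
`E[e^X · 1{e^X ≤ L/S₀}] < ε e^{rt}`. -/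
theorem lognormal_lower_tail (r σ t S₀ L ε : ℝ)
    (hσ : 0 < σ) (hr : 0 ≤ r) (ht : 0 < t) (hL : 0 < L) (hLS : L < S₀)
    (hε : ε ∈ Set.Ioo (0 : ℝ) (1 / 2))
    (hεcond : Real.log (1 / (2 * ε)) > (4 / 5) * (1 - 2 * r / σ ^ 2) * Real.log (S₀ / L))
    (htcond : t < 8 * (Real.log (S₀ / L)) ^ 2 / (25 * σ ^ 2 * Real.log (1 / (2 * ε)))) :
    ((gaussianReal ((r - σ ^ 2 / 2) * t) (Real.toNNReal (σ ^ 2 * t)))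
        (Set.Iic (Real.log (L / S₀)))).toReal < ε ∧
      ∫ x in {x : ℝ | Real.exp x ≤ L / S₀}, Real.exp x
          ∂(gaussianReal ((r - σ ^ 2 / 2) * t) (Real.toNNReal (σ ^ 2 * t)))
        < ε * Real.exp (r * t) :=
  lognormal_lower_tail_general r σ t S₀ L ε hσ ht hL hLS hε hεcond htcond
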